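/- Let Ω ⊆ ℝ³ be a bounded open set and let (μ, P, C) be a smooth orthogonal coordinate system on Ω. Suppose there exists a smooth positive function g of two variables with |∇C|² = g(P, C) on Ω (so that |∇C|² is independent of μ), and let Λ be a smooth function of two variables with ∂_P(Λ²) = 2/g. Then for every smooth σ : ℝ → ℝ the vector field w = ∇(σ∘μ) + Λ(P, C)·∇C satisfies w × curl w = ∇P on Ω. -/

import Mathlib

noncomputable section

/-- Points of `ℝ³`. -/
abbrev V3 : Type := Fin 3 → ℝ

/-- Standard basis vector. -/
def ee (i : Fin 3) : V3 := fun j => if j = i then 1 else 0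

/-- Partial derivative in the `i`-th coordinate direction. -/
def pd (i : Fin 3) (f : V3 → ℝ) (x : V3) : ℝ := fderiv ℝ f x (ee i)

/-- Gradient of a scalar field. -/
def grad (f : V3 → ℝ) (x : V3) : V3 := fun i => pd i f x

/-- Divergence of a vector field. -/
def vdiv (w : V3 → V3) (x : V3) : ℝ :=
  pd 0 (fun y => w y 0) x + pd 1 (fun y => w y 1) x + pd 2 (fun y => w y 2) x

/-- Curl of a vector field. -/
def vcurl (w : V3 → V3) (x : V3) : V3 :=
  ![pd 1 (fun y => w y 2) x - pd 2 (fun y => w y 1) x,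
    pd 2 (fun y => w y 0) x - pd 0 (fun y => w y 2) x,
    pd 0 (fun y => w y 1) x - pd 1 (fun y => w y 0) x]

/-- Euclidean dot product on `ℝ³`. -/
def dot3 (a b : V3) : ℝ := a 0 * b 0 + a 1 * b 1 + a 2 * b 2

/-- Cross product on `ℝ³`. -/
def cross3 (a b : V3) : V3 :=
  ![a 1 * b 2 - a 2 * b 1, a 2 * b 0 - a 0 * b 2, a 0 * b 1 - a 1 * b 0]

/-- Euclidean norm on `ℝ³`. -/
def norm3 (a : V3) : ℝ := Real.sqrt (dot3 a a)

/-- Laplacian of a scalar field. -/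
def lap (f : V3 → ℝ) (x : V3) : ℝ := vdiv (grad f) x

/-- A smooth orthogonal coordinate system on `Ω`: three smooth scalar functions whose
gradients are nonvanishing and pairwise orthogonal at every point of `Ω`. -/
def OrthoSystem (Ω : Set V3) (f g h : V3 → ℝ) : Prop :=
  ContDiffOn ℝ (⊤ : ℕ∞) f Ω ∧ ContDiffOn ℝ (⊤ : ℕ∞) g Ω ∧ ContDiffOn ℝ (⊤ : ℕ∞) h Ω ∧
    ∀ x ∈ Ω, grad f x ≠ 0 ∧ grad g x ≠ 0 ∧ grad h x ≠ 0 ∧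
      dot3 (grad f x) (grad g x) = 0 ∧ dot3 (grad f x) (grad h x) = 0 ∧
      dot3 (grad g x) (grad h x) = 0


lemma pd_add {f g : V3 → ℝ} {x : V3} (hf : DifferentiableAt ℝ f x)
    (hg : DifferentiableAt ℝ g x) (i : Fin 3) :
    pd i (fun y => f y + g y) x = pd i f x + pd i g x := by
  simp [pd, fderiv_fun_add hf hg]

lemma pd_mul {f g : V3 → ℝ} {x : V3} (hf : DifferentiableAt ℝ f x)
    (hg : DifferentiableAt ℝ g x) (i : Fin 3) :
    pd i (fun y => f y * g y) x = pd i f x * g x + f x * pd i g x := by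
  simp [pd, fderiv_fun_mul hf hg]; ring

lemma pd_pd {f : V3 → ℝ} {x : V3} (hf : ContDiffAt ℝ (⊤ : ℕ∞) f x) (i j : Fin 3) :
    pd i (fun y => pd j f y) x = fderiv ℝ (fderiv ℝ f) x (ee i) (ee j) := by
  have hd : DifferentiableAt ℝ (fderiv ℝ f) x :=
    (hf.fderiv_right (m := 1) (WithTop.coe_le_coe.mpr le_top)).differentiableAt one_ne_zero
  simp only [pd]
  rw [fderiv_clm_apply hd (differentiableAt_const _)]
  simp

lemma pd_symm {f : V3 → ℝ} {x : V3} (hf : ContDiffAt ℝ (⊤ : ℕ∞) f x) (i j : Fin 3) :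
    pd i (fun y => pd j f y) x = pd j (fun y => pd i f y) x := by
  rw [pd_pd hf, pd_pd hf]
  exact ((hf.of_le (WithTop.coe_le_coe.mpr le_top)).isSymmSndFDerivAt (n := 2) (by simp)) _ _

lemma pd_diffAt {f : V3 → ℝ} {x : V3} (hf : ContDiffAt ℝ (⊤ : ℕ∞) f x) (i : Fin 3) :
    DifferentiableAt ℝ (fun y => pd i f y) x := by
  have hd : DifferentiableAt ℝ (fderiv ℝ f) x :=
    (hf.fderiv_right (m := 1) (WithTop.coe_le_coe.mpr le_top)).differentiableAt one_ne_zero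
  exact hd.clm_apply (differentiableAt_const _)

lemma pd_comp2 {F : ℝ × ℝ → ℝ} {P C : V3 → ℝ} {x : V3}
    (hF : DifferentiableAt ℝ F (P x, C x)) (hP : DifferentiableAt ℝ P x)
    (hC : DifferentiableAt ℝ C x) (i : Fin 3) :
    pd i (fun y => F (P y, C y)) x
      = fderiv ℝ F (P x, C x) (1, 0) * pd i P x
        + fderiv ℝ F (P x, C x) (0, 1) * pd i C x := by
  have hφ : DifferentiableAt ℝ (fun y => (P y, C y)) x := hP.prodMk hC
  have h : fderiv ℝ (fun y => F (P y, C y)) x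
      = (fderiv ℝ F (P x, C x)).comp (fderiv ℝ (fun y => (P y, C y)) x) :=
    fderiv_comp x hF hφ
  have hφ' : fderiv ℝ (fun y => (P y, C y)) x (ee i) = (pd i P x, pd i C x) := by
    rw [hP.fderiv_prodMk hC]; rfl
  simp only [pd, h, ContinuousLinearMap.comp_apply, hφ']
  have h2 : ((fderiv ℝ P x) (ee i), (fderiv ℝ C x) (ee i))
      = (fderiv ℝ P x) (ee i) • ((1 : ℝ), (0 : ℝ)) + (fderiv ℝ C x) (ee i) • ((0 : ℝ), (1 : ℝ)) := by
    simp [Prod.ext_iff]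
  rw [h2, map_add, map_smul, map_smul, smul_eq_mul, smul_eq_mul]; ring

lemma pd_comp1 {σ : ℝ → ℝ} {μ : V3 → ℝ} {x : V3}
    (hσ : DifferentiableAt ℝ σ (μ x)) (hμ : DifferentiableAt ℝ μ x) (i : Fin 3) :
    pd i (fun y => σ (μ y)) x = deriv σ (μ x) * pd i μ x := by
  have h : fderiv ℝ (fun y => σ (μ y)) x = (fderiv ℝ σ (μ x)).comp (fderiv ℝ μ x) :=
    fderiv_comp x hσ hμ
  simp only [pd, h, ContinuousLinearMap.comp_apply]
  have : fderiv ℝ μ x (ee i) = (fderiv ℝ μ x (ee i)) • (1:ℝ) := by simp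
  rw [this, map_smul, smul_eq_mul, fderiv_apply_one_eq_deriv]; simp; ring


/-- If `(μ, P, C)` is an orthogonal coordinate system on `Ω` with
`|∇C|² = g(P, C)` and `Λ` satisfies `∂_P(Λ²) = 2/g`, then for every smooth `σ` the field
`w = ∇(σ∘μ) + Λ(P, C)·∇C` solves `w × curl w = ∇P` on `Ω`. -/
theorem stmt12 (Ω : Set V3) (hΩ : IsOpen Ω) (hb : Bornology.IsBounded Ω)
    (μ P C : V3 → ℝ) (hortho : OrthoSystem Ω μ P C)
    (g : ℝ × ℝ → ℝ) (hg : ContDiff ℝ (⊤ : ℕ∞) g) (hgpos : ∀ q : ℝ × ℝ, 0 < g q)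
    (hC : ∀ x ∈ Ω, dot3 (grad C x) (grad C x) = g (P x, C x))
    (Λ : ℝ × ℝ → ℝ) (hΛ : ContDiff ℝ (⊤ : ℕ∞) Λ)
    (hΛP : ∀ q : ℝ × ℝ, fderiv ℝ (fun r => Λ r ^ 2) q (1, 0) = 2 / g q)
    (σ : ℝ → ℝ) (hσ : ContDiff ℝ (⊤ : ℕ∞) σ)
    (w : V3 → V3)
    (hw : w = fun x => grad (fun y => σ (μ y)) x + Λ (P x, C x) • grad C x) :
    ∀ x ∈ Ω, cross3 (w x) (vcurl w x) = grad P x := by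
  obtain ⟨hμd, hPd, hCd, horth⟩ := hortho
  subst hw
  intro x hx
  have hxn : Ω ∈ nhds x := hΩ.mem_nhds hx
  have hμx : ContDiffAt ℝ (⊤ : ℕ∞) μ x := hμd.contDiffAt hxn
  have hPx : ContDiffAt ℝ (⊤ : ℕ∞) P x := hPd.contDiffAt hxn
  have hCx : ContDiffAt ℝ (⊤ : ℕ∞) C x := hCd.contDiffAt hxn
  have hSx : ContDiffAt ℝ (⊤ : ℕ∞) (fun y => σ (μ y)) x := (hσ.contDiffAt).comp x hμx
  have hΛx : ContDiffAt ℝ (⊤ : ℕ∞) (fun y => Λ (P y, C y)) x :=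
    (hΛ.contDiffAt).comp x (hPx.prodMk hCx)
  -- abbreviations
  set a : V3 := grad μ x with ha
  set b : V3 := grad P x with hb
  set c : V3 := grad C x with hcv
  set q : ℝ × ℝ := (P x, C x) with hq
  set L : ℝ := Λ q with hL
  set LP : ℝ := fderiv ℝ Λ q (1, 0) with hLPd
  set LC : ℝ := fderiv ℝ Λ q (0, 1) with hLCd
  set s' : ℝ := deriv σ (μ x) with hs'
  -- the components of w
  have hwfun : ∀ i : Fin 3, (fun y => (grad (fun z => σ (μ z)) y + Λ (P y, C y) • grad C y) i)
      = fun y => (fun z => pd i (fun t => σ (μ t)) z) y + (fun z => Λ (P z, C z) * pd i C z) y := by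
    intro i; funext y; simp [grad]
  -- derivatives of w components at x
  have hpdw : ∀ i j : Fin 3,
      pd j (fun y => (grad (fun z => σ (μ z)) y + Λ (P y, C y) • grad C y) i) x
        = pd j (fun y => pd i (fun t => σ (μ t)) y) x
          + ((LP * b j + LC * c j) * c i + L * pd j (fun y => pd i C y) x) := by
    intro i j
    rw [hwfun i, pd_add (pd_diffAt hSx i)
      ((hΛx.differentiableAt (by simp)).fun_mul (pd_diffAt hCx i)) j,
      pd_mul (hΛx.differentiableAt (by simp)) (pd_diffAt hCx i) j,
      pd_comp2 (hΛ.differentiable (by simp) _) (hPx.differentiableAt (by simp))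
        (hCx.differentiableAt (by simp)) j]
    rfl
  -- curl components
  have hc0 : vcurl (fun y => grad (fun z => σ (μ z)) y + Λ (P y, C y) • grad C y) x 0
      = LP * (b 1 * c 2 - b 2 * c 1) := by
    show pd 1 _ x - pd 2 _ x = _
    rw [hpdw 2 1, hpdw 1 2, pd_symm hSx 1 2, pd_symm hCx 1 2]; ring
  have hc1 : vcurl (fun y => grad (fun z => σ (μ z)) y + Λ (P y, C y) • grad C y) x 1
      = LP * (b 2 * c 0 - b 0 * c 2) := by
    show pd 2 _ x - pd 0 _ x = _
    rw [hpdw 0 2, hpdw 2 0, pd_symm hSx 2 0, pd_symm hCx 2 0]; ring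
  have hc2 : vcurl (fun y => grad (fun z => σ (μ z)) y + Λ (P y, C y) • grad C y) x 2
      = LP * (b 0 * c 1 - b 1 * c 0) := by
    show pd 0 _ x - pd 1 _ x = _
    rw [hpdw 1 0, hpdw 0 1, pd_symm hSx 0 1, pd_symm hCx 0 1]; ring
  -- values of w at x
  have hwx : ∀ i : Fin 3, (grad (fun z => σ (μ z)) x + Λ (P x, C x) • grad C x) i
      = s' * a i + L * c i := by
    intro i
    show pd i (fun z => σ (μ z)) x + Λ (P x, C x) * pd i C x = s' * a i + L * c i
    rw [pd_comp1 ((hσ.differentiable (by simp)) _) (hμx.differentiableAt (by simp)) i]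
    rfl
  -- orthogonality and norm facts
  obtain ⟨-, -, -, h12, h13, h23⟩ := horth x hx
  have hcc : c 0 * c 0 + c 1 * c 1 + c 2 * c 2 = g q := hC x hx
  have h12' : a 0 * b 0 + a 1 * b 1 + a 2 * b 2 = 0 := h12
  have h13' : a 0 * c 0 + a 1 * c 1 + a 2 * c 2 = 0 := h13
  have h23' : b 0 * c 0 + b 1 * c 1 + b 2 * c 2 = 0 := h23
  -- the key identity  LP * L * g q = 1
  have hkey : LP * L * g q = 1 := by
    have hpow : (fun r : ℝ × ℝ => Λ r ^ 2) = fun r => Λ r * Λ r := by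
      funext r; ring
    have h := hΛP q
    rw [hpow, fderiv_fun_mul ((hΛ.differentiable (by simp)) q) ((hΛ.differentiable (by simp)) q)] at h
    simp only [ContinuousLinearMap.add_apply, ContinuousLinearMap.smul_apply,
      smul_eq_mul] at h
    have hgq : g q ≠ 0 := ne_of_gt (hgpos q)
    field_simp at h ⊢
    nlinarith [h]
  -- finish
  funext i
  fin_cases i
  · show _ * _ - _ * _ = b 0
    beta_reduce
    rw [hwx 1, hwx 2, hc1, hc2]
    linear_combination (LP*(b 0)*s')*h13' + (LP*(b 0)*L)*hcc - (LP*(c 0)*s')*h12'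
      - (LP*(c 0)*L)*h23' + (b 0)*hkey
  · show _ * _ - _ * _ = b 1
    beta_reduce
    rw [hwx 2, hwx 0, hc2, hc0]
    linear_combination (LP*(b 1)*s')*h13' + (LP*(b 1)*L)*hcc - (LP*(c 1)*s')*h12'
      - (LP*(c 1)*L)*h23' + (b 1)*hkey
  · show _ * _ - _ * _ = b 2
    beta_reduce
    rw [hwx 0, hwx 1, hc0, hc1]
    linear_combination (LP*(b 2)*s')*h13' + (LP*(b 2)*L)*hcc - (LP*(c 2)*s')*h12'
      - (LP*(c 2)*L)*h23' + (b 2)*hkey
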